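/- Let (V, P, g) be 4-dimensional with tr P = 0. A curvature-like tensor L on V is a Riemannian P-tensor if and only if L = (1/8){τ(L)(π₁ + π₂) + τ*(L)π₃}, where τ(L) and τ*(L) are the scalar curvature and the associated scalar curvature of L. -/

import Mathlib

/-! `P` is a self-adjoint involution with trace zero, so it has an orthonormal eigenbasis
`e₀, e₁, e₂, e₃` with eigenvalues `1, 1, -1, -1`: `V = V₊ ⊕ V₋` with both summands planes.
For a Riemannian `P`-tensor, `L(x, y, z, w) = -L(x, y, z, w)` whenever `z ∈ V₊` and `w ∈ V₋`,
and by pair symmetry the same holds for the first pair; the Bianchi identity then kills the last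
mixed component `L(e₀, e₁, e₂, e₃)`. Hence `L = s ω₊ ⊗ ω₊ + t ω₋ ⊗ ω₋`, where `ω±` are the area
forms of `V±`. In this frame `π₁ + π₂ ± π₃ = -4 ω± ⊗ ω±`, `τ = -2 (s + t)` and
`τ* = -2 (s - t)`, which is the formula. Conversely, `P` swaps `π₁` and `π₂` and fixes `π₃`. -/

open scoped RealInnerProductSpace
open Module

variable {V : Type*} [NormedAddCommGroup V] [InnerProductSpace ℝ V]
  [FiniteDimensional ℝ V]

/-- The tensor ψ₁(S) built from a (0,2)-tensor S and the metric g. -/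
noncomputable def psi1 (S : V → V → ℝ) (x y z w : V) : ℝ :=
  ⟪y, z⟫ * S x w - ⟪x, z⟫ * S y w + S y z * ⟪x, w⟫ - S x z * ⟪y, w⟫

/-- π₁ = (1/2)ψ₁(g). -/
noncomputable def pi1 (x y z w : V) : ℝ :=
  (1 / 2 : ℝ) * psi1 (fun a b : V => ⟪a, b⟫) x y z w

/-- π₂ = (1/2)ψ₂(g), where ψ₂(S)(x,y,z,w) = ψ₁(S)(x,y,Pz,Pw). -/
noncomputable def pi2 (P : V →ₗ[ℝ] V) (x y z w : V) : ℝ :=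
  (1 / 2 : ℝ) * psi1 (fun a b : V => ⟪a, b⟫) x y (P z) (P w)

/-- π₃ = ψ₁(g̃), where g̃(x,y) = g(x,Py). -/
noncomputable def pi3 (P : V →ₗ[ℝ] V) (x y z w : V) : ℝ :=
  psi1 (fun a b : V => ⟪a, P b⟫) x y z w

/-- The Ricci tensor ρ(L)(y,z) = Σᵢ L(eᵢ, y, z, eᵢ) of a (0,4)-tensor L,
computed in an orthonormal basis. -/
noncomputable def ricci (L : V →ₗ[ℝ] V →ₗ[ℝ] V →ₗ[ℝ] V →ₗ[ℝ] ℝ) (y z : V) : ℝ :=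
  ∑ i, L (stdOrthonormalBasis ℝ V i) y z (stdOrthonormalBasis ℝ V i)

/-- The scalar curvature τ(L) = Σⱼ ρ(L)(eⱼ, eⱼ). -/
noncomputable def scalarCurv (L : V →ₗ[ℝ] V →ₗ[ℝ] V →ₗ[ℝ] V →ₗ[ℝ] ℝ) : ℝ :=
  ∑ j, ricci L (stdOrthonormalBasis ℝ V j) (stdOrthonormalBasis ℝ V j)

/-- The associated Ricci tensor ρ*(L)(y,z) = Σᵢ L(eᵢ, y, z, Peᵢ). -/
noncomputable def ricciStar (P : V →ₗ[ℝ] V)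
    (L : V →ₗ[ℝ] V →ₗ[ℝ] V →ₗ[ℝ] V →ₗ[ℝ] ℝ) (y z : V) : ℝ :=
  ∑ i, L (stdOrthonormalBasis ℝ V i) y z (P (stdOrthonormalBasis ℝ V i))

/-- The associated scalar curvature τ*(L) = Σⱼ ρ*(L)(eⱼ, eⱼ). -/
noncomputable def scalarCurvStar (P : V →ₗ[ℝ] V)
    (L : V →ₗ[ℝ] V →ₗ[ℝ] V →ₗ[ℝ] V →ₗ[ℝ] ℝ) : ℝ :=
  ∑ j, ricciStar P L (stdOrthonormalBasis ℝ V j) (stdOrthonormalBasis ℝ V j)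

section CurvatureLike

variable {M : Type*} [AddCommGroup M] [Module ℝ M]

structure IsCurvatureLike (L : M →ₗ[ℝ] M →ₗ[ℝ] M →ₗ[ℝ] M →ₗ[ℝ] ℝ) : Prop where
  antisymm_left : ∀ x y z w, L x y z w = -L y x z w
  antisymm_right : ∀ x y z w, L x y z w = -L x y w z
  bianchi : ∀ x y z w, L x y z w + L y z x w + L z x y w = 0

variable {L : M →ₗ[ℝ] M →ₗ[ℝ] M →ₗ[ℝ] M →ₗ[ℝ] ℝ}

theorem IsCurvatureLike.pair_symm (hL : IsCurvatureLike L) (x y z w : M) :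
    L x y z w = L z w x y := by
  linarith [hL.bianchi x y z w, hL.bianchi y z w x, hL.bianchi z w x y, hL.bianchi w x y z,
    hL.antisymm_right y z w x, hL.antisymm_right z w y x, hL.antisymm_left w y z x,
    hL.antisymm_right y w z x, hL.antisymm_right w x z y, hL.antisymm_right x z w y,
    hL.antisymm_right x y w z, hL.antisymm_left z x y w]

theorem apply_eq_zero_of_invariant {P : M →ₗ[ℝ] M}
    (hPL : ∀ x y z w, L x y (P z) (P w) = L x y z w) {x y z w : M}
    (hz : P z = z) (hw : P w = -w) : L x y z w = 0 := by
  have h := hPL x y z w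
  rw [hz, hw, map_neg] at h
  linarith

end CurvatureLike

section InnerProductSpace

variable {E : Type*} [NormedAddCommGroup E] [InnerProductSpace ℝ E]

theorem OrthonormalBasis.sum_apply_self_eq {ι κ : Type*} [Fintype ι] [Fintype κ]
    (e : OrthonormalBasis ι ℝ E) (f : OrthonormalBasis κ ℝ E) (B : E →ₗ[ℝ] E →ₗ[ℝ] ℝ) :
    ∑ i, B (e i) (e i) = ∑ j, B (f j) (f j) := by
  calc ∑ i, B (e i) (e i) = ∑ i, ∑ j, ⟪e i, f j⟫ * B (e i) (f j) := by
        refine Finset.sum_congr rfl fun i _ => ?_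
        rw [← congrArg (B (e i)) (f.sum_repr' (e i))]
        simp [real_inner_comm]
    _ = ∑ j, B (∑ i, ⟪e i, f j⟫ • e i) (f j) := by
        rw [Finset.sum_comm]
        simp
    _ = ∑ j, B (f j) (f j) := by simp only [e.sum_repr']

theorem OrthonormalBasis.inner_eq_fin_four (b : OrthonormalBasis (Fin 4) ℝ E) (x y : E) :
    ⟪x, y⟫ = ⟪b 0, x⟫ * ⟪b 0, y⟫ + ⟪b 1, x⟫ * ⟪b 1, y⟫ + ⟪b 2, x⟫ * ⟪b 2, y⟫
      + ⟪b 3, x⟫ * ⟪b 3, y⟫ := by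
  rw [← b.sum_inner_mul_inner x y, Fin.sum_univ_four]
  simp only [real_inner_comm x]

theorem eq_one_or_eq_neg_one_of_involutive {P : E →ₗ[ℝ] E} (hP2 : ∀ x, P (P x) = x)
    {μ : ℝ} {v : E} (hv : v ≠ 0) (hPv : P v = μ • v) : μ = 1 ∨ μ = -1 := by
  have h : (μ * μ - 1) • v = 0 := by
    rw [sub_smul, mul_smul, ← hPv, ← map_smul, ← hPv, hP2, one_smul, sub_self]
  rw [smul_eq_zero, sub_eq_zero, mul_self_eq_one_iff] at h
  exact h.resolve_right hv

theorem LinearMap.IsSymmetric.eigenvalues_eq_of_involutive [FiniteDimensional ℝ E]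
    {P : E →ₗ[ℝ] E} (hP : P.IsSymmetric) (hdim : finrank ℝ E = 4) (hP2 : ∀ x, P (P x) = x)
    (htr : LinearMap.trace ℝ E P = 0) : hP.eigenvalues hdim = ![1, 1, -1, -1] := by
  set μ := hP.eigenvalues hdim
  have hμ (i : Fin 4) : μ i = 1 ∨ μ i = -1 :=
    eq_one_or_eq_neg_one_of_involutive hP2 ((hP.eigenvectorBasis hdim).orthonormal.ne_zero i)
      (hP.apply_eigenvectorBasis hdim i)
  have hsum : μ 0 + μ 1 + μ 2 + μ 3 = 0 := by
    rw [← Fin.sum_univ_four, ← htr, hP.trace_eq_sum_eigenvalues hdim]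
    rfl
  have h01 : μ 1 ≤ μ 0 := hP.eigenvalues_antitone hdim (by decide)
  have h12 : μ 2 ≤ μ 1 := hP.eigenvalues_antitone hdim (by decide)
  have h23 : μ 3 ≤ μ 2 := hP.eigenvalues_antitone hdim (by decide)
  obtain ⟨h0, h1, h2, h3⟩ : μ 0 = 1 ∧ μ 1 = 1 ∧ μ 2 = -1 ∧ μ 3 = -1 := by
    rcases hμ 0 with h0 | h0 <;> rcases hμ 1 with h1 | h1 <;>
      rcases hμ 2 with h2 | h2 <;> rcases hμ 3 with h3 | h3 <;>
      first | exact ⟨h0, h1, h2, h3⟩ | (exfalso; linarith)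
  ext i
  fin_cases i <;> simp [h0, h1, h2, h3]

structure IsAdaptedBasis (P : E →ₗ[ℝ] E) (b : OrthonormalBasis (Fin 4) ℝ E) : Prop where
  apply_zero : P (b 0) = b 0
  apply_one : P (b 1) = b 1
  apply_two : P (b 2) = -b 2
  apply_three : P (b 3) = -b 3

theorem exists_isAdaptedBasis [FiniteDimensional ℝ E] (hdim : finrank ℝ E = 4)
    {P : E →ₗ[ℝ] E} (hP : P.IsSymmetric) (hP2 : ∀ x, P (P x) = x)
    (htr : LinearMap.trace ℝ E P = 0) : ∃ b, IsAdaptedBasis P b := by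
  have hμ := hP.eigenvalues_eq_of_involutive hdim hP2 htr
  refine ⟨hP.eigenvectorBasis hdim, ⟨?_, ?_, ?_, ?_⟩⟩ <;>
    simp [hP.apply_eigenvectorBasis, hμ]

theorem pi1_add_pi2_apply_apply {P : E →ₗ[ℝ] E} (hP2 : ∀ x, P (P x) = x) (x y z w : E) :
    pi1 x y (P z) (P w) + pi2 P x y (P z) (P w) = pi1 x y z w + pi2 P x y z w := by
  simp only [pi1, pi2, hP2]
  ring

theorem pi3_apply_apply {P : E →ₗ[ℝ] E} (hP2 : ∀ x, P (P x) = x) (x y z w : E) :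
    pi3 P x y (P z) (P w) = pi3 P x y z w := by
  simp only [pi3, psi1, hP2]
  ring

def innerWedge (e f x y : E) : ℝ := ⟪e, x⟫ * ⟪f, y⟫ - ⟪f, x⟫ * ⟪e, y⟫

noncomputable def areaTensor (b : OrthonormalBasis (Fin 4) ℝ E) (s t : ℝ) (x y z w : E) : ℝ :=
  s * (innerWedge (b 0) (b 1) x y * innerWedge (b 0) (b 1) z w)
    + t * (innerWedge (b 2) (b 3) x y * innerWedge (b 2) (b 3) z w)

namespace IsAdaptedBasis

variable {P : E →ₗ[ℝ] E} {b : OrthonormalBasis (Fin 4) ℝ E}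

theorem inner_apply_eq (hb : IsAdaptedBasis P b) (x y : E) :
    ⟪x, P y⟫ = ⟪b 0, x⟫ * ⟪b 0, y⟫ + ⟪b 1, x⟫ * ⟪b 1, y⟫ - ⟪b 2, x⟫ * ⟪b 2, y⟫
      - ⟪b 3, x⟫ * ⟪b 3, y⟫ := by
  conv_lhs => rw [← b.sum_repr' y]
  simp only [Fin.sum_univ_four, map_add, map_smul, hb.apply_zero, hb.apply_one, hb.apply_two,
    hb.apply_three, inner_add_right, real_inner_smul_right, inner_neg_right, real_inner_comm x]
  ring

theorem bilin_apply_eq (hb : IsAdaptedBasis P b) (B : E →ₗ[ℝ] E →ₗ[ℝ] ℝ)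
    (hB : ∀ x y, B x y = -B y x) (hmix : ∀ x y, P x = x → P y = -y → B x y = 0) (x y : E) :
    B x y = B (b 0) (b 1) * innerWedge (b 0) (b 1) x y
      + B (b 2) (b 3) * innerWedge (b 2) (b 3) x y := by
  have hself (i : Fin 4) : B (b i) (b i) = 0 := by linarith [hB (b i) (b i)]
  have h02 := hmix _ _ hb.apply_zero hb.apply_two
  have h03 := hmix _ _ hb.apply_zero hb.apply_three
  have h12 := hmix _ _ hb.apply_one hb.apply_two
  have h13 := hmix _ _ hb.apply_one hb.apply_three
  rw [← b.sum_repr' x, ← b.sum_repr' y]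
  simp [Fin.sum_univ_four, innerWedge, inner_add_right, real_inner_smul_right, b.inner_eq_ite,
    hself, h02, h03, h12, h13, hB (b 1) (b 0), hB (b 2) (b 0), hB (b 3) (b 0), hB (b 2) (b 1),
    hB (b 3) (b 1), hB (b 3) (b 2)]
  ring

theorem apply_eq_areaTensor {L : E →ₗ[ℝ] E →ₗ[ℝ] E →ₗ[ℝ] E →ₗ[ℝ] ℝ}
    (hb : IsAdaptedBasis P b) (hL : IsCurvatureLike L)
    (hPL : ∀ x y z w, L x y (P z) (P w) = L x y z w) (x y z w : E) :
    L x y z w = areaTensor b (L (b 0) (b 1) (b 0) (b 1)) (L (b 2) (b 3) (b 2) (b 3)) x y z w := by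
  have hright (x y : E) := hb.bilin_apply_eq (L x y) (hL.antisymm_right x y)
    (fun _ _ => apply_eq_zero_of_invariant hPL)
  have hleft (z w : E) (hz : P z = z) (hw : P w = -w) (x y : E) : L z w x y = 0 := by
    rw [hL.pair_symm]
    exact apply_eq_zero_of_invariant hPL hz hw
  have hmixed : L (b 0) (b 1) (b 2) (b 3) = 0 := by
    have h := hL.bianchi (b 0) (b 1) (b 2) (b 3)
    rw [hleft _ _ hb.apply_one hb.apply_two, hL.antisymm_left (b 2) (b 0),
      hleft _ _ hb.apply_zero hb.apply_two] at h
    linarith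
  rw [hright x y, hL.pair_symm x y, hL.pair_symm x y, hright (b 0) (b 1), hright (b 2) (b 3),
    hmixed, hL.pair_symm (b 2) (b 3), hmixed, areaTensor]
  ring

theorem areaTensor_eq (hb : IsAdaptedBasis P b) (s t : ℝ) (x y z w : E) :
    areaTensor b s t x y z w = (1 / 8 : ℝ) *
      (-2 * (s + t) * (pi1 x y z w + pi2 P x y z w) + -2 * (s - t) * pi3 P x y z w) := by
  simp only [areaTensor, pi1, pi2, pi3, psi1, innerWedge]
  rw [hb.inner_apply_eq y z, hb.inner_apply_eq x w, hb.inner_apply_eq x z, hb.inner_apply_eq y w,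
    b.inner_eq_fin_four y z, b.inner_eq_fin_four x w, b.inner_eq_fin_four x z,
    b.inner_eq_fin_four y w]
  ring

end IsAdaptedBasis

end InnerProductSpace

section Curvature

variable {ι : Type*} [Fintype ι] (L : V →ₗ[ℝ] V →ₗ[ℝ] V →ₗ[ℝ] V →ₗ[ℝ] ℝ)

theorem ricci_eq_sum (b : OrthonormalBasis ι ℝ V) (y z : V) :
    ricci L y z = ∑ i, L (b i) y z (b i) :=
  (stdOrthonormalBasis ℝ V).sum_apply_self_eq b ((L.flip y).flip z)

theorem ricciStar_eq_sum (P : V →ₗ[ℝ] V) (b : OrthonormalBasis ι ℝ V) (y z : V) :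
    ricciStar P L y z = ∑ i, L (b i) y z (P (b i)) :=
  (stdOrthonormalBasis ℝ V).sum_apply_self_eq b (((L.flip y).flip z).compl₂ P)

theorem scalarCurv_eq_sum (b : OrthonormalBasis ι ℝ V) :
    scalarCurv L = ∑ i, ∑ j, L (b i) (b j) (b j) (b i) := by
  simp only [scalarCurv, ricci_eq_sum L b]
  rw [Finset.sum_comm]
  exact Finset.sum_congr rfl fun i _ =>
    (stdOrthonormalBasis ℝ V).sum_apply_self_eq b ((L (b i)).compr₂ (LinearMap.applyₗ (b i)))

theorem scalarCurvStar_eq_sum (P : V →ₗ[ℝ] V) (b : OrthonormalBasis ι ℝ V) :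
    scalarCurvStar P L = ∑ i, ∑ j, L (b i) (b j) (b j) (P (b i)) := by
  simp only [scalarCurvStar, ricciStar_eq_sum L P b]
  rw [Finset.sum_comm]
  exact Finset.sum_congr rfl fun i _ =>
    (stdOrthonormalBasis ℝ V).sum_apply_self_eq b ((L (b i)).compr₂ (LinearMap.applyₗ (P (b i))))

variable {b : OrthonormalBasis (Fin 4) ℝ V} {L} {s t : ℝ}

theorem scalarCurv_eq_of_eq_areaTensor (hL : ∀ x y z w, L x y z w = areaTensor b s t x y z w) :
    scalarCurv L = -2 * (s + t) := by
  simp [scalarCurv_eq_sum L b, Fin.sum_univ_four, hL, areaTensor, innerWedge, b.inner_eq_ite]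
  ring

theorem IsAdaptedBasis.scalarCurvStar_eq {P : V →ₗ[ℝ] V} (hb : IsAdaptedBasis P b)
    (hL : ∀ x y z w, L x y z w = areaTensor b s t x y z w) :
    scalarCurvStar P L = -2 * (s - t) := by
  simp [scalarCurvStar_eq_sum L P b, Fin.sum_univ_four, hb.apply_zero, hb.apply_one,
    hb.apply_two, hb.apply_three, hL, areaTensor, innerWedge, b.inner_eq_ite]
  ring

end Curvature

/-- Let (V, P, g) be 4-dimensional with tr P = 0. A
curvature-like tensor L on V is a Riemannian P-tensor if and only if
L = (1/8){τ(L)(π₁ + π₂) + τ*(L)π₃}. -/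
theorem riemannian_P_tensor_iff_form_dim4
    (hdim : finrank ℝ V = 4)
    (P : V →ₗ[ℝ] V)
    (hP2 : ∀ x : V, P (P x) = x)
    (hPg : ∀ x y : V, ⟪P x, P y⟫ = ⟪x, y⟫)
    (htr : LinearMap.trace ℝ V P = 0)
    (L : V →ₗ[ℝ] V →ₗ[ℝ] V →ₗ[ℝ] V →ₗ[ℝ] ℝ)
    (hA1 : ∀ x y z w : V, L x y z w = - L y x z w)
    (hA2 : ∀ x y z w : V, L x y z w = - L x y w z)
    (hBianchi : ∀ x y z w : V, L x y z w + L y z x w + L z x y w = 0) :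
    (∀ x y z w : V, L x y (P z) (P w) = L x y z w) ↔
    (∀ x y z w : V,
      L x y z w = (1 / 8 : ℝ) *
        (scalarCurv L * (pi1 x y z w + pi2 P x y z w) +
          scalarCurvStar P L * pi3 P x y z w)) := by
  have hL : IsCurvatureLike L := ⟨hA1, hA2, hBianchi⟩
  have hP : P.IsSymmetric := fun x y => by simpa only [hP2] using hPg x (P y)
  obtain ⟨b, hb⟩ := exists_isAdaptedBasis hdim hP hP2 htr
  constructor
  · intro hPL x y z w
    have hst := hb.apply_eq_areaTensor hL hPL
    rw [scalarCurv_eq_of_eq_areaTensor hst, hb.scalarCurvStar_eq hst, hst]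
    exact hb.areaTensor_eq _ _ x y z w
  · intro hform x y z w
    rw [hform, hform, pi1_add_pi2_apply_apply hP2, pi3_apply_apply hP2]
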